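/- Let (K, K^∨) be a pair of dual reflexive Gorenstein cones of index k with deg^∨ = t_1 + ⋯ + t_k where each t_i ∈ K^∨_(1), and for 1 ≤ i ≤ k set Δ_i = {x ∈ K : ⟨x, t_j⟩ = δ_{ij} for all 1 ≤ j ≤ k}. If v ∈ K and α_i = ⟨v, t_i⟩ for each i, then there exist points x_i ∈ Δ_i, one for each index i with α_i > 0, such that v = ∑_{i : α_i > 0} α_i x_i. -/

import Mathlib

open scoped BigOperators Pointwise

noncomputable section

/-- The standard pairing `⟨x, y⟩ = ∑ i, x i * y i` on `ℝ^d`. -/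
def pairR {d : ℕ} (x y : Fin d → ℝ) : ℝ := ∑ i, x i * y i

/-- A point of `ℝ^d` is a lattice point if all of its coordinates are integers. -/
def IsLatticePoint {d : ℕ} (x : Fin d → ℝ) : Prop := ∀ i, ∃ z : ℤ, x i = (z : ℝ)

/-- The dual cone `K^∨ = {y : ⟨x, y⟩ ≥ 0 for all x ∈ K}`. -/
def dualCone {d : ℕ} (K : Set (Fin d → ℝ)) : Set (Fin d → ℝ) :=
  { y | ∀ x ∈ K, 0 ≤ pairR x y }

/-- A Gorenstein cone with degree element `n` (a lattice point): the set of all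
nonnegative real linear combinations of a finite set of lattice points, each pairing
to `1` with `n`, such that `K ∩ (−K) = {0}` and `span K = ℝ^d`. -/
def IsGorensteinCone {d : ℕ} (K : Set (Fin d → ℝ)) (n : Fin d → ℝ) : Prop :=
  IsLatticePoint n ∧
  (∃ S : Finset (Fin d → ℝ),
      (∀ v ∈ S, IsLatticePoint v ∧ pairR v n = 1) ∧
      K = { x | ∃ c : (Fin d → ℝ) → ℝ, (∀ v, 0 ≤ c v) ∧ x = ∑ v ∈ S, c v • v }) ∧
  K ∩ (-K) = {0} ∧
  Submodule.span ℝ K = ⊤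

/-- `K_(1)`: the lattice points `m ∈ K` with `⟨m, deg^∨⟩ = 1`. -/
def Kone {d : ℕ} (K : Set (Fin d → ℝ)) (degVee : Fin d → ℝ) : Set (Fin d → ℝ) :=
  { m | IsLatticePoint m ∧ m ∈ K ∧ pairR m degVee = 1 }

/-- `K^∨_(1)`: the lattice points `n ∈ K^∨` with `⟨deg, n⟩ = 1`. -/
def KvOne {d : ℕ} (K : Set (Fin d → ℝ)) (deg : Fin d → ℝ) : Set (Fin d → ℝ) :=
  { n | IsLatticePoint n ∧ n ∈ dualCone K ∧ pairR deg n = 1 }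

/-!
Every generator `s` of `K` pairs with the `t_j` to nonnegative integers summing to
`⟨s, deg^∨⟩ = 1`, so `s` lies in exactly one `Δ_i`. Writing `v = ∑ c_s s` and grouping the
generators by the `Δ_i` they lie in gives `v = ∑ F_i` with `⟨F_i, t_j⟩ = δ_{ij} α_i`; then
`x_i = F_i / α_i` for `α_i > 0`, while `F_i = 0` when `α_i = 0`.
-/

lemma pairR_eq_dotProduct {d : ℕ} (x y : Fin d → ℝ) : pairR x y = dotProduct x y := rfl

lemma pairR_sum_smul {d : ℕ} (S : Finset (Fin d → ℝ)) (c : (Fin d → ℝ) → ℝ)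
    (y : Fin d → ℝ) : pairR (∑ s ∈ S, c s • s) y = ∑ s ∈ S, c s * pairR s y := by
  simp only [pairR_eq_dotProduct, sum_dotProduct, smul_dotProduct, smul_eq_mul]

lemma IsLatticePoint.exists_pairR_eq_intCast {d : ℕ} {x y : Fin d → ℝ}
    (hx : IsLatticePoint x) (hy : IsLatticePoint y) : ∃ z : ℤ, pairR x y = z := by
  choose a ha using hx
  choose b hb using hy
  exact ⟨∑ i, a i * b i, by push_cast [pairR, ha, hb]; rfl⟩

lemma exists_eq_ite_of_sum_eq_one {ι : Type*} [Fintype ι] [DecidableEq ι] {g : ι → ℤ}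
    (hg : ∀ j, 0 ≤ g j) (hsum : ∑ j, g j = 1) : ∃ i, ∀ j, g j = if i = j then 1 else 0 := by
  obtain ⟨i, -, hi⟩ := Finset.exists_ne_zero_of_sum_ne_zero (s := Finset.univ) (f := g)
    (by rw [hsum]; exact one_ne_zero)
  refine ⟨i, fun j => ?_⟩
  split_ifs with hij
  · subst hij
    have := Finset.single_le_sum (fun j _ => hg j) (Finset.mem_univ i)
    have := hg i
    omega
  · have := Finset.sum_le_sum_of_subset_of_nonneg (Finset.subset_univ {i, j})
      (fun j _ _ => hg j)
    rw [Finset.sum_pair hij] at this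
    have := hg i
    have := hg j
    omega

lemma exists_pairR_eq_ite_of_pairR_sum_eq_one {d : ℕ} {ι : Type*} [Fintype ι] [DecidableEq ι]
    {s : Fin d → ℝ} {t : ι → Fin d → ℝ} (hs : IsLatticePoint s) (ht : ∀ j, IsLatticePoint (t j))
    (hnonneg : ∀ j, 0 ≤ pairR s (t j)) (hsum : pairR s (∑ j, t j) = 1) :
    ∃ i, ∀ j, pairR s (t j) = if i = j then 1 else 0 := by
  choose z hz using fun j => hs.exists_pairR_eq_intCast (ht j)
  have hzsum : ∑ j, z j = 1 := by
    rw [pairR_eq_dotProduct, dotProduct_sum] at hsum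
    simp only [← pairR_eq_dotProduct, hz] at hsum
    exact_mod_cast hsum
  obtain ⟨i, hi⟩ := exists_eq_ite_of_sum_eq_one (fun j => by exact_mod_cast hz j ▸ hnonneg j) hzsum
  exact ⟨i, fun j => by rw [hz, hi]; split_ifs <;> simp⟩

section FiniteCone

variable {d : ℕ}

def finiteCone (S : Finset (Fin d → ℝ)) : Set (Fin d → ℝ) :=
  { x | ∃ c : (Fin d → ℝ) → ℝ, (∀ v, 0 ≤ c v) ∧ x = ∑ v ∈ S, c v • v }

lemma sum_smul_mem_finiteCone {S : Finset (Fin d → ℝ)} {c : (Fin d → ℝ) → ℝ}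
    (hc : ∀ v ∈ S, 0 ≤ c v) : ∑ v ∈ S, c v • v ∈ finiteCone S := by
  refine ⟨fun v => if v ∈ S then c v else 0, fun v => ?_, Finset.sum_congr rfl fun v hv => ?_⟩
  · dsimp only
    split_ifs with hv
    exacts [hc v hv, le_rfl]
  · simp only [if_pos hv]

lemma subset_finiteCone {S : Finset (Fin d → ℝ)} : (S : Set (Fin d → ℝ)) ⊆ finiteCone S := by
  intro s (hs : s ∈ S)
  have := sum_smul_mem_finiteCone (S := S) (c := fun v => if v = s then 1 else 0)
    (fun v _ => by split_ifs <;> norm_num)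
  simpa [Finset.sum_ite_eq', hs] using this

lemma smul_mem_finiteCone {S : Finset (Fin d → ℝ)} {a : ℝ} {x : Fin d → ℝ} (ha : 0 ≤ a)
    (hx : x ∈ finiteCone S) : a • x ∈ finiteCone S := by
  obtain ⟨c, hc, rfl⟩ := hx
  rw [Finset.smul_sum]
  simp_rw [smul_smul]
  exact sum_smul_mem_finiteCone fun v _ => mul_nonneg ha (hc v)

end FiniteCone

section FiberSum

variable {d : ℕ} {ι : Type*} [DecidableEq ι] {S : Finset (Fin d → ℝ)} {t : ι → Fin d → ℝ}

def IsDeltaPairing (S : Finset (Fin d → ℝ)) (t : ι → Fin d → ℝ) : Prop :=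
  ∀ s ∈ S, ∃ i, ∀ j, pairR s (t j) = if i = j then 1 else 0

lemma IsDeltaPairing.pairR_nonneg (hS : IsDeltaPairing S t) {s : Fin d → ℝ} (hs : s ∈ S)
    (i : ι) : 0 ≤ pairR s (t i) := by
  obtain ⟨i₀, hi₀⟩ := hS s hs
  rw [hi₀]
  split_ifs <;> norm_num

/-- When every generator pairs to `δ_{ij}` with the `t j`, the factor `⟨s, t i⟩` selects the
generators lying in `Δ_i`. -/
def fiberSum (S : Finset (Fin d → ℝ)) (t : ι → Fin d → ℝ) (c : (Fin d → ℝ) → ℝ) (i : ι) :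
    Fin d → ℝ :=
  ∑ s ∈ S, (c s * pairR s (t i)) • s

lemma sum_fiberSum [Fintype ι] (hS : IsDeltaPairing S t) (c : (Fin d → ℝ) → ℝ) :
    ∑ i, fiberSum S t c i = ∑ s ∈ S, c s • s := by
  simp only [fiberSum]
  rw [Finset.sum_comm]
  refine Finset.sum_congr rfl fun s hs => ?_
  obtain ⟨i₀, hi₀⟩ := hS s hs
  simp [hi₀]

lemma pairR_fiberSum (hS : IsDeltaPairing S t) (c : (Fin d → ℝ) → ℝ) (i j : ι) :
    pairR (fiberSum S t c i) (t j) = if i = j then pairR (∑ s ∈ S, c s • s) (t i) else 0 := by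
  rw [fiberSum, pairR_sum_smul, pairR_sum_smul]
  have hidem : ∀ s ∈ S, pairR s (t i) * pairR s (t j) = if i = j then pairR s (t i) else 0 := by
    intro s hs
    obtain ⟨i₀, hi₀⟩ := hS s hs
    simp only [hi₀]
    split_ifs <;> simp_all
  split_ifs with hij
  · subst hij
    exact Finset.sum_congr rfl fun s hs => by rw [mul_assoc, hidem s hs, if_pos rfl]
  · exact Finset.sum_eq_zero fun s hs => by rw [mul_assoc, hidem s hs, if_neg hij, mul_zero]

lemma fiberSum_mem_finiteCone (hS : IsDeltaPairing S t) {c : (Fin d → ℝ) → ℝ}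
    (hc : ∀ s ∈ S, 0 ≤ c s) (i : ι) :
    fiberSum S t c i ∈ finiteCone S :=
  sum_smul_mem_finiteCone fun s hs => mul_nonneg (hc s hs) (hS.pairR_nonneg hs i)

lemma fiberSum_eq_zero (hS : IsDeltaPairing S t) {c : (Fin d → ℝ) → ℝ}
    (hc : ∀ s ∈ S, 0 ≤ c s) {i : ι}
    (hi : pairR (∑ s ∈ S, c s • s) (t i) = 0) : fiberSum S t c i = 0 := by
  have hterm : ∀ s ∈ S, 0 ≤ c s * pairR s (t i) := fun s hs =>
    mul_nonneg (hc s hs) (hS.pairR_nonneg hs i)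
  rw [pairR_sum_smul, Finset.sum_eq_zero_iff_of_nonneg hterm] at hi
  exact Finset.sum_eq_zero fun s hs => by rw [hi s hs, zero_smul]

end FiberSum

theorem stmt1_general {d k : ℕ} (K : Set (Fin d → ℝ)) (deg degVee : Fin d → ℝ)
    (hK : IsGorensteinCone K degVee)
    (t : Fin k → (Fin d → ℝ)) (ht : ∀ i, t i ∈ KvOne K deg)
    (hdec : degVee = ∑ i, t i)
    (Δ : Fin k → Set (Fin d → ℝ))
    (hΔ : ∀ i, Δ i = { x | x ∈ K ∧ ∀ j, pairR x (t j) = if i = j then 1 else 0 })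
    (v : Fin d → ℝ) (hv : v ∈ K)
    (α : Fin k → ℝ) (hα : ∀ i, α i = pairR v (t i)) :
    ∃ x : Fin k → (Fin d → ℝ),
      (∀ i, 0 < α i → x i ∈ Δ i) ∧
      v = ∑ i ∈ Finset.univ.filter (fun i => 0 < α i), α i • x i := by
  obtain ⟨-, ⟨S, hS, hKS⟩, -⟩ := hK
  have hgen : IsDeltaPairing S t := fun s hs =>
    exists_pairR_eq_ite_of_pairR_sum_eq_one (hS s hs).1 (fun j => (ht j).1)
      (fun j => (ht j).2.1 s (hKS ▸ subset_finiteCone hs)) (hdec ▸ (hS s hs).2)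
  have hα0 : ∀ i, 0 ≤ α i := fun i => hα i ▸ (ht i).2.1 v hv
  rw [hKS] at hv
  obtain ⟨c, hc, rfl⟩ := hv
  refine ⟨fun i => (α i)⁻¹ • fiberSum S t c i, fun i hi => ?_, ?_⟩
  · rw [hΔ i, hKS]
    refine ⟨smul_mem_finiteCone (inv_nonneg.mpr hi.le)
      (fiberSum_mem_finiteCone hgen (fun s _ => hc s) i), fun j => ?_⟩
    rw [pairR_eq_dotProduct, smul_dotProduct, ← pairR_eq_dotProduct, pairR_fiberSum hgen, ← hα]
    split_ifs <;> simp [hi.ne']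
  · have hzero : ∀ i ∈ Finset.univ.filter (fun i => ¬ 0 < α i), fiberSum S t c i = 0 :=
      fun i hi => fiberSum_eq_zero hgen (fun s _ => hc s)
        (by rw [← hα]; exact ((hα0 i).eq_of_not_lt (Finset.mem_filter.mp hi).2).symm)
    rw [← sum_fiberSum hgen, ← Finset.sum_filter_add_sum_filter_not _ (fun i => 0 < α i),
      Finset.sum_eq_zero hzero, add_zero]
    exact Finset.sum_congr rfl fun i hi => by
      rw [smul_smul, mul_inv_cancel₀ (Finset.mem_filter.mp hi).2.ne', one_smul]

/-- With `deg^∨ = t_1 + ⋯ + t_k` and `Δ_i = {x ∈ K : ⟨x, t_j⟩ = δ_{ij}}`,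
if `v ∈ K` and `α_i = ⟨v, t_i⟩`, then there are points `x_i ∈ Δ_i`, one for each `i`
with `α_i > 0`, such that `v = ∑_{i : α_i > 0} α_i x_i`. -/
theorem stmt1 {d k : ℕ} (K : Set (Fin d → ℝ)) (deg degVee : Fin d → ℝ)
    (hK : IsGorensteinCone K degVee) (hKv : IsGorensteinCone (dualCone K) deg)
    (hk : pairR deg degVee = (k : ℝ))
    (t : Fin k → (Fin d → ℝ)) (ht : ∀ i, t i ∈ KvOne K deg)
    (hdec : degVee = ∑ i, t i)
    (Δ : Fin k → Set (Fin d → ℝ))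
    (hΔ : ∀ i, Δ i = { x | x ∈ K ∧ ∀ j, pairR x (t j) = if i = j then 1 else 0 })
    (v : Fin d → ℝ) (hv : v ∈ K)
    (α : Fin k → ℝ) (hα : ∀ i, α i = pairR v (t i)) :
    ∃ x : Fin k → (Fin d → ℝ),
      (∀ i, 0 < α i → x i ∈ Δ i) ∧
      v = ∑ i ∈ Finset.univ.filter (fun i => 0 < α i), α i • x i :=
  stmt1_general K deg degVee hK t ht hdec Δ hΔ v hv α hα
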